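/- Let Ĝ be a signed non-separable bigraph with bipartition (X,Y) and without isolated vertices, and let x_1,…,x_α, y_1,…,y_β be a canonical ordering of Ĝ. Suppose that Ĝ contains an induced subgraph belonging to Z_1 on vertices x_i, x_j, x_k, y_ℓ, y_r where x_i, x_j ∈ N(y_1). If no edge of Ĝ is signed simplicial, then Ĝ contains a graph in F_2 ∪ F_3 ∪ F_4 ∪ F_5 as an induced subgraph. -/

import Mathlib

universe u

/-! ## Basic unsigned notions for bipartite graphs -/

/-- `G` has an induced cycle of length at least 6 (signs, if any, are arbitrary). -/
def HasLongInducedCycle {V : Type u} (G : SimpleGraph V) : Prop :=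
  ∃ n : ℕ, 6 ≤ n ∧ ∃ f : ZMod n → V, Function.Injective f ∧
    ∀ i j : ZMod n, G.Adj (f i) (f j) ↔ (j = i + 1 ∨ i = j + 1)

/-- A graph is separable if it contains an induced `2K₂`. -/
def IsSeparableGraph {V : Type u} (G : SimpleGraph V) : Prop :=
  ∃ a b c d : V, [a, b, c, d].Pairwise (· ≠ ·) ∧
    G.Adj a b ∧ G.Adj c d ∧ ¬ G.Adj a c ∧ ¬ G.Adj a d ∧ ¬ G.Adj b c ∧ ¬ G.Adj b d

/-- An edge `ab` of a bipartite graph is simplicial if every vertex of `N(a) - {b}`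
is adjacent to every vertex of `N(b) - {a}`. -/
def SimplicialEdge {V : Type u} (G : SimpleGraph V) (a b : V) : Prop :=
  G.Adj a b ∧ ∀ c ∈ G.neighborSet a \ {b}, ∀ d ∈ G.neighborSet b \ {a}, G.Adj c d

/-- A canonical ordering of a bigraph with bipartition given by `side`
(`X` is the `side = true` part, `Y` the `side = false` part): the neighbourhoods of
the `x`'s are decreasing and those of the `y`'s are increasing. -/
def IsCanonicalOrdering {V : Type u} (G : SimpleGraph V) (side : V → Bool)
    {α β : ℕ} (x : Fin α → V) (y : Fin β → V) : Prop :=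
  Function.Injective x ∧ Function.Injective y ∧
  (∀ w : V, side w = true ↔ w ∈ Set.range x) ∧
  (∀ w : V, side w = false ↔ w ∈ Set.range y) ∧
  (∀ i j : Fin α, i ≤ j → G.neighborSet (x j) ⊆ G.neighborSet (x i)) ∧
  (∀ i j : Fin β, i ≤ j → G.neighborSet (y i) ⊆ G.neighborSet (y j))

/-- `H` is a non-trivial (i.e. containing at least one edge) connected component
of `G - S`. -/
def IsNontrivialComponentOf {V : Type u} (G : SimpleGraph V) (S H : Set V) : Prop :=
  H ⊆ Sᶜ ∧ (G.induce H).Connected ∧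
  (∀ a ∈ H, ∀ b ∈ Sᶜ, G.Adj a b → b ∈ H) ∧
  (∃ a ∈ H, ∃ b ∈ H, G.Adj a b)

/-- `S` minimally separates the non-trivial components `H` and `H'` of `G - S`:
every vertex of `S` has a neighbour in `H` and a neighbour in `H'`. -/
def MinimallySeparates {V : Type u} (G : SimpleGraph V) (S H H' : Set V) : Prop :=
  IsNontrivialComponentOf G S H ∧ IsNontrivialComponentOf G S H' ∧ H ≠ H' ∧
  ∀ s ∈ S, (∃ a ∈ H, G.Adj s a) ∧ (∃ a ∈ H', G.Adj s a)

/-! ## Signed bigraphs -/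

/-- A signed bigraph: a bipartite graph (with bipartition recorded by `side`)
whose edges carry a sign (`true` = positive, `false` = negative). -/
structure SignedBigraph (V : Type u) where
  graph : SimpleGraph V
  sign : V → V → Bool
  sign_symm : ∀ a b : V, sign a b = sign b a
  side : V → Bool
  bipartite : ∀ ⦃a b : V⦄, graph.Adj a b → side a ≠ side b

namespace SignedBigraph

variable {V : Type u}

def Adj (G : SignedBigraph V) (a b : V) : Prop := G.graph.Adj a b

/-- `N(ab) = (N(a) ∪ N(b)) - {a, b}`. -/
def edgeNbhd (G : SignedBigraph V) (a b : V) : Set V :=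
  (G.graph.neighborSet a ∪ G.graph.neighborSet b) \ {a, b}

/-- The edge `ab` is signed simplicial: `N(ab)` induces a positive biclique. -/
def SignedSimplicial (G : SignedBigraph V) (a b : V) : Prop :=
  G.Adj a b ∧
    ∀ c ∈ G.edgeNbhd a b, ∀ d ∈ G.edgeNbhd a b,
      G.side c ≠ G.side d → (G.Adj c d ∧ G.sign c d = true)

/-- Delete a set of edges from a signed bigraph (keeping all vertices). -/
def deleteEdges (G : SignedBigraph V) (s : Set (Sym2 V)) : SignedBigraph V where
  graph := G.graph.deleteEdges s
  sign := G.sign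
  sign_symm := G.sign_symm
  side := G.side
  bipartite := by
    intro a b h
    exact G.bipartite (SimpleGraph.deleteEdges_adj.mp h).1

/-- The induced signed subgraph on a set of vertices. -/
def induce (G : SignedBigraph V) (A : Set V) : SignedBigraph A where
  graph := G.graph.induce A
  sign a b := G.sign a b
  sign_symm a b := G.sign_symm a b
  side a := G.side a
  bipartite := by
    intro a b h
    exact G.bipartite h

/-- A chordal signed bigraph: the edges can be ordered `e₁, …, e_m` so that each `eᵢ`
is a signed simplicial edge of the signed bigraph obtained by deleting `e₁, …, e_{i-1}`. -/
def IsChordal (G : SignedBigraph V) : Prop :=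
  ∃ l : List (Sym2 V), l.Nodup ∧ (∀ e, e ∈ G.graph.edgeSet ↔ e ∈ l) ∧
    ∀ (i : ℕ) (h : i < l.length), ∃ a b : V,
      l.get ⟨i, h⟩ = s(a, b) ∧
      (G.deleteEdges {e | e ∈ l.take i}).SignedSimplicial a b

/-! ## Forbidden patterns F₁ – F₆, D, long cycles -/

/-- `G` contains the all-negative 4-cycle `F₁` as an induced subgraph. -/
def HasF1 (G : SignedBigraph V) : Prop :=
  ∃ u1 u2 v1 v2 : V,
    [u1, u2, v1, v2].Pairwise (· ≠ ·) ∧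
    G.Adj u1 v1 ∧ G.Adj u1 v2 ∧ G.Adj u2 v1 ∧ G.Adj u2 v2 ∧
    ¬ G.Adj u1 u2 ∧ ¬ G.Adj v1 v2 ∧
    G.sign u1 v1 = false ∧ G.sign u1 v2 = false ∧
    G.sign u2 v1 = false ∧ G.sign u2 v2 = false

/-- `G` contains a member of `F₂` (a signed `K_{2,3}`) as an induced subgraph. -/
def HasF2 (G : SignedBigraph V) : Prop :=
  ∃ u1 u2 v1 v2 v3 : V,
    [u1, u2, v1, v2, v3].Pairwise (· ≠ ·) ∧
    G.Adj u1 v1 ∧ G.Adj u1 v2 ∧ G.Adj u1 v3 ∧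
    G.Adj u2 v1 ∧ G.Adj u2 v2 ∧ G.Adj u2 v3 ∧
    ¬ G.Adj u1 u2 ∧ ¬ G.Adj v1 v2 ∧ ¬ G.Adj v1 v3 ∧ ¬ G.Adj v2 v3 ∧
    G.sign u1 v1 = false ∧ G.sign u1 v2 = false ∧
    G.sign u2 v2 = false ∧ G.sign u2 v3 = false

/-- `G` contains a member of `F₃` (a signed `K_{2,4}`) as an induced subgraph. -/
def HasF3 (G : SignedBigraph V) : Prop :=
  ∃ u1 u2 v1 v2 v3 v4 : V,
    [u1, u2, v1, v2, v3, v4].Pairwise (· ≠ ·) ∧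
    G.Adj u1 v1 ∧ G.Adj u1 v2 ∧ G.Adj u1 v3 ∧ G.Adj u1 v4 ∧
    G.Adj u2 v1 ∧ G.Adj u2 v2 ∧ G.Adj u2 v3 ∧ G.Adj u2 v4 ∧
    ¬ G.Adj u1 u2 ∧ ¬ G.Adj v1 v2 ∧ ¬ G.Adj v1 v3 ∧ ¬ G.Adj v1 v4 ∧
    ¬ G.Adj v2 v3 ∧ ¬ G.Adj v2 v4 ∧ ¬ G.Adj v3 v4 ∧
    G.sign u1 v1 = false ∧ G.sign u1 v2 = false ∧
    G.sign u2 v3 = false ∧ G.sign u2 v4 = false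

/-- `G` contains a member of `F₄` (a signed `K_{3,3}` with negative perfect matching)
as an induced subgraph. -/
def HasF4 (G : SignedBigraph V) : Prop :=
  ∃ u1 u2 u3 v1 v2 v3 : V,
    [u1, u2, u3, v1, v2, v3].Pairwise (· ≠ ·) ∧
    G.Adj u1 v1 ∧ G.Adj u1 v2 ∧ G.Adj u1 v3 ∧
    G.Adj u2 v1 ∧ G.Adj u2 v2 ∧ G.Adj u2 v3 ∧
    G.Adj u3 v1 ∧ G.Adj u3 v2 ∧ G.Adj u3 v3 ∧
    ¬ G.Adj u1 u2 ∧ ¬ G.Adj u1 u3 ∧ ¬ G.Adj u2 u3 ∧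
    ¬ G.Adj v1 v2 ∧ ¬ G.Adj v1 v3 ∧ ¬ G.Adj v2 v3 ∧
    G.sign u1 v1 = false ∧ G.sign u2 v2 = false ∧ G.sign u3 v3 = false

/-- `G` contains a member of `F₅` as an induced subgraph. -/
def HasF5 (G : SignedBigraph V) : Prop :=
  ∃ x1 x2 x3 y1 y2 y3 : V,
    [x1, x2, x3, y1, y2, y3].Pairwise (· ≠ ·) ∧
    G.Adj x1 y1 ∧ G.Adj x1 y2 ∧ ¬ G.Adj x1 y3 ∧
    G.Adj x2 y1 ∧ G.Adj x2 y2 ∧ G.Adj x2 y3 ∧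
    G.Adj x3 y1 ∧ G.Adj x3 y2 ∧ G.Adj x3 y3 ∧
    ¬ G.Adj x1 x2 ∧ ¬ G.Adj x1 x3 ∧ ¬ G.Adj x2 x3 ∧
    ¬ G.Adj y1 y2 ∧ ¬ G.Adj y1 y3 ∧ ¬ G.Adj y2 y3 ∧
    G.sign x2 y1 = false ∧ G.sign x3 y2 = false

/-- `G` contains a member of `F₆` as an induced subgraph. -/
def HasF6 (G : SignedBigraph V) : Prop :=
  ∃ x1 x2 x3 x4 y1 y2 y3 y4 : V,
    [x1, x2, x3, x4, y1, y2, y3, y4].Pairwise (· ≠ ·) ∧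
    G.Adj x1 y1 ∧ G.Adj x1 y2 ∧ ¬ G.Adj x1 y3 ∧ ¬ G.Adj x1 y4 ∧
    G.Adj x2 y1 ∧ G.Adj x2 y2 ∧ ¬ G.Adj x2 y3 ∧ ¬ G.Adj x2 y4 ∧
    G.Adj x3 y1 ∧ G.Adj x3 y2 ∧ G.Adj x3 y3 ∧ G.Adj x3 y4 ∧
    G.Adj x4 y1 ∧ G.Adj x4 y2 ∧ G.Adj x4 y3 ∧ G.Adj x4 y4 ∧
    ¬ G.Adj x1 x2 ∧ ¬ G.Adj x1 x3 ∧ ¬ G.Adj x1 x4 ∧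
    ¬ G.Adj x2 x3 ∧ ¬ G.Adj x2 x4 ∧ ¬ G.Adj x3 x4 ∧
    ¬ G.Adj y1 y2 ∧ ¬ G.Adj y1 y3 ∧ ¬ G.Adj y1 y4 ∧
    ¬ G.Adj y2 y3 ∧ ¬ G.Adj y2 y4 ∧ ¬ G.Adj y3 y4 ∧
    G.sign x1 y1 = false ∧ G.sign x2 y1 = false ∧ G.sign x3 y2 = false ∧
    G.sign x4 y3 = false ∧ G.sign x4 y4 = false

/-- `G` contains a member of `D` (a 6-cycle `x₁y₁x₂y₃x₃y₂x₁` plus a negative chord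
`x₂y₂`) as an induced subgraph. -/
def HasD (G : SignedBigraph V) : Prop :=
  ∃ x1 x2 x3 y1 y2 y3 : V,
    [x1, x2, x3, y1, y2, y3].Pairwise (· ≠ ·) ∧
    G.Adj x1 y1 ∧ G.Adj y1 x2 ∧ G.Adj x2 y3 ∧ G.Adj y3 x3 ∧
    G.Adj x3 y2 ∧ G.Adj y2 x1 ∧
    G.Adj x2 y2 ∧ G.sign x2 y2 = false ∧
    ¬ G.Adj x1 y3 ∧ ¬ G.Adj x3 y1 ∧
    ¬ G.Adj x1 x2 ∧ ¬ G.Adj x1 x3 ∧ ¬ G.Adj x2 x3 ∧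
    ¬ G.Adj y1 y2 ∧ ¬ G.Adj y1 y3 ∧ ¬ G.Adj y2 y3

/-- `G` contains an induced signed cycle of length at least 6. -/
def HasLongCycle (G : SignedBigraph V) : Prop :=
  HasLongInducedCycle G.graph

/-! ## Minimal forbidden patterns M₁ – M₅ for complete bigraphs -/

def HasM1 (G : SignedBigraph V) : Prop := G.HasF1

def HasM2 (G : SignedBigraph V) : Prop :=
  ∃ u1 u2 v1 v2 v3 : V,
    [u1, u2, v1, v2, v3].Pairwise (· ≠ ·) ∧
    G.Adj u1 v1 ∧ G.Adj u1 v2 ∧ G.Adj u1 v3 ∧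
    G.Adj u2 v1 ∧ G.Adj u2 v2 ∧ G.Adj u2 v3 ∧
    ¬ G.Adj u1 u2 ∧ ¬ G.Adj v1 v2 ∧ ¬ G.Adj v1 v3 ∧ ¬ G.Adj v2 v3 ∧
    G.sign u1 v1 = false ∧ G.sign u1 v2 = false ∧
    G.sign u2 v2 = false ∧ G.sign u2 v3 = false ∧
    G.sign u1 v3 = true ∧ G.sign u2 v1 = true

def HasM3 (G : SignedBigraph V) : Prop :=
  ∃ u1 u2 v1 v2 v3 v4 : V,
    [u1, u2, v1, v2, v3, v4].Pairwise (· ≠ ·) ∧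
    G.Adj u1 v1 ∧ G.Adj u1 v2 ∧ G.Adj u1 v3 ∧ G.Adj u1 v4 ∧
    G.Adj u2 v1 ∧ G.Adj u2 v2 ∧ G.Adj u2 v3 ∧ G.Adj u2 v4 ∧
    ¬ G.Adj u1 u2 ∧ ¬ G.Adj v1 v2 ∧ ¬ G.Adj v1 v3 ∧ ¬ G.Adj v1 v4 ∧
    ¬ G.Adj v2 v3 ∧ ¬ G.Adj v2 v4 ∧ ¬ G.Adj v3 v4 ∧
    G.sign u1 v1 = false ∧ G.sign u1 v2 = false ∧
    G.sign u2 v3 = false ∧ G.sign u2 v4 = false ∧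
    G.sign u1 v3 = true ∧ G.sign u1 v4 = true ∧
    G.sign u2 v1 = true ∧ G.sign u2 v2 = true

def HasM4 (G : SignedBigraph V) : Prop :=
  ∃ u1 u2 u3 v1 v2 v3 : V,
    [u1, u2, u3, v1, v2, v3].Pairwise (· ≠ ·) ∧
    G.Adj u1 v1 ∧ G.Adj u1 v2 ∧ G.Adj u1 v3 ∧
    G.Adj u2 v1 ∧ G.Adj u2 v2 ∧ G.Adj u2 v3 ∧
    G.Adj u3 v1 ∧ G.Adj u3 v2 ∧ G.Adj u3 v3 ∧
    ¬ G.Adj u1 u2 ∧ ¬ G.Adj u1 u3 ∧ ¬ G.Adj u2 u3 ∧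
    ¬ G.Adj v1 v2 ∧ ¬ G.Adj v1 v3 ∧ ¬ G.Adj v2 v3 ∧
    G.sign u1 v1 = false ∧ G.sign u2 v2 = false ∧ G.sign u3 v3 = false ∧
    G.sign u1 v2 = true ∧ G.sign u1 v3 = true ∧ G.sign u2 v1 = true ∧
    G.sign u2 v3 = true ∧ G.sign u3 v1 = true ∧ G.sign u3 v2 = true

def HasM5 (G : SignedBigraph V) : Prop :=
  ∃ x1 x2 x3 y1 y2 y3 : V,
    [x1, x2, x3, y1, y2, y3].Pairwise (· ≠ ·) ∧
    G.Adj x1 y1 ∧ G.Adj x1 y2 ∧ G.Adj x1 y3 ∧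
    G.Adj x2 y1 ∧ G.Adj x2 y2 ∧ G.Adj x2 y3 ∧
    G.Adj x3 y1 ∧ G.Adj x3 y2 ∧ G.Adj x3 y3 ∧
    ¬ G.Adj x1 x2 ∧ ¬ G.Adj x1 x3 ∧ ¬ G.Adj x2 x3 ∧
    ¬ G.Adj y1 y2 ∧ ¬ G.Adj y1 y3 ∧ ¬ G.Adj y2 y3 ∧
    G.sign x1 y1 = false ∧ G.sign x1 y2 = false ∧
    G.sign x2 y2 = false ∧ G.sign x3 y3 = false ∧
    G.sign x1 y3 = true ∧ G.sign x2 y1 = true ∧ G.sign x2 y3 = true ∧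
    G.sign x3 y1 = true ∧ G.sign x3 y2 = true

/-! ## The patterns W₁ – W₆ (relativized to an ambient vertex set `A`, with the
distinguished vertices being exactly the vertices in `S`). -/

def HasW1In (G : SignedBigraph V) (A S : Set V) : Prop :=
  ∃ u y x z : V, u ∈ A ∧ y ∈ A ∧ x ∈ A ∧ z ∈ A ∧
    [u, y, x, z].Pairwise (· ≠ ·) ∧
    G.Adj u y ∧ G.Adj u z ∧ G.Adj x y ∧ G.Adj x z ∧
    ¬ G.Adj u x ∧ ¬ G.Adj y z ∧
    G.sign x y = false ∧ G.sign x z = false ∧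
    x ∈ S ∧ u ∉ S ∧ y ∉ S ∧ z ∉ S

def HasW2In (G : SignedBigraph V) (A S : Set V) : Prop :=
  ∃ u y v z p : V, u ∈ A ∧ y ∈ A ∧ v ∈ A ∧ z ∈ A ∧ p ∈ A ∧
    [u, y, v, z, p].Pairwise (· ≠ ·) ∧
    G.Adj u y ∧ G.Adj u z ∧ G.Adj v y ∧ G.Adj v z ∧ G.Adj p v ∧
    ¬ G.Adj u v ∧ ¬ G.Adj y z ∧ ¬ G.Adj p u ∧ ¬ G.Adj p y ∧ ¬ G.Adj p z ∧
    G.sign v y = false ∧ G.sign v z = false ∧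
    p ∈ S ∧ u ∉ S ∧ y ∉ S ∧ v ∉ S ∧ z ∉ S

def HasW3In (G : SignedBigraph V) (A S : Set V) : Prop :=
  ∃ u y v z p : V, u ∈ A ∧ y ∈ A ∧ v ∈ A ∧ z ∈ A ∧ p ∈ A ∧
    [u, y, v, z, p].Pairwise (· ≠ ·) ∧
    G.Adj u y ∧ G.Adj u z ∧ G.Adj v y ∧ G.Adj v z ∧ G.Adj p v ∧ G.Adj p u ∧
    ¬ G.Adj u v ∧ ¬ G.Adj y z ∧ ¬ G.Adj p y ∧ ¬ G.Adj p z ∧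
    G.sign v y = false ∧ G.sign v z = false ∧ G.sign p u = false ∧
    p ∈ S ∧ u ∉ S ∧ y ∉ S ∧ v ∉ S ∧ z ∉ S

def HasW4In (G : SignedBigraph V) (A S : Set V) : Prop :=
  ∃ u y c z p q : V, u ∈ A ∧ y ∈ A ∧ c ∈ A ∧ z ∈ A ∧ p ∈ A ∧ q ∈ A ∧
    [u, y, c, z, p, q].Pairwise (· ≠ ·) ∧
    G.Adj u y ∧ G.Adj u z ∧ G.Adj c y ∧ G.Adj c z ∧ G.Adj p c ∧ G.Adj p u ∧
    G.Adj q p ∧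
    ¬ G.Adj u c ∧ ¬ G.Adj y z ∧ ¬ G.Adj p y ∧ ¬ G.Adj p z ∧
    ¬ G.Adj q u ∧ ¬ G.Adj q y ∧ ¬ G.Adj q c ∧ ¬ G.Adj q z ∧
    G.sign c y = false ∧ G.sign c z = false ∧ G.sign p u = false ∧
    q ∈ S ∧ u ∉ S ∧ y ∉ S ∧ c ∉ S ∧ z ∉ S ∧ p ∉ S

def HasW5In (G : SignedBigraph V) (A S : Set V) : Prop :=
  ∃ u y v z x : V, u ∈ A ∧ y ∈ A ∧ v ∈ A ∧ z ∈ A ∧ x ∈ A ∧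
    [u, y, v, z, x].Pairwise (· ≠ ·) ∧
    G.Adj u y ∧ G.Adj u z ∧ G.Adj v y ∧ G.Adj v z ∧ G.Adj x v ∧ G.Adj x u ∧
    ¬ G.Adj u v ∧ ¬ G.Adj y z ∧ ¬ G.Adj x y ∧ ¬ G.Adj x z ∧
    G.sign v y = false ∧ G.sign x u = false ∧
    x ∈ S ∧ y ∈ S ∧ u ∉ S ∧ v ∉ S ∧ z ∉ S

def HasW6In (G : SignedBigraph V) (A S : Set V) : Prop :=
  ∃ u y v z x : V, u ∈ A ∧ y ∈ A ∧ v ∈ A ∧ z ∈ A ∧ x ∈ A ∧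
    [u, y, v, z, x].Pairwise (· ≠ ·) ∧
    G.Adj u y ∧ G.Adj u z ∧ G.Adj v y ∧ G.Adj v z ∧ G.Adj x v ∧
    ¬ G.Adj u v ∧ ¬ G.Adj y z ∧ ¬ G.Adj x u ∧ ¬ G.Adj x y ∧ ¬ G.Adj x z ∧
    G.sign v y = false ∧
    x ∈ S ∧ y ∈ S ∧ u ∉ S ∧ v ∉ S ∧ z ∉ S

/-! ## Tadpoles, sums and joins -/

/-- The vertex set of a tadpole with heads `w, y, z` and path vertices `x`. -/
def tadVerts {n : ℕ} (w y z : V) (x : Fin n → V) : Set V :=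
  {w, y, z} ∪ Set.range x

/-- The data `(w, y, z, x)` forms an induced tadpole in `G`:
`w, y, z, x ⟨k⟩` induce a 4-cycle whose edges `x ⟨k⟩ y` and `x ⟨k⟩ z` are negative,
together with the induced path `x ⟨k⟩, x ⟨k-1⟩, …, x 0`; the vertex `x 0` is the end
and `w, y, z` are the heads.  If `t2 = true` the tadpole is of type 2: there is
additionally a negative edge from `w` to `x ⟨k-1⟩`.
(The paper's parameter `k ≥ 1` corresponds to `k + 1` here.) -/
structure IsInducedTadpole (G : SignedBigraph V) (k : ℕ) (t2 : Bool)
    (w y z : V) (x : Fin (k + 1) → V) : Prop where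
  t2_len : t2 = true → 1 ≤ k
  inj : Function.Injective x
  w_notmem : ∀ i, w ≠ x i
  y_notmem : ∀ i, y ≠ x i
  z_notmem : ∀ i, z ≠ x i
  wy : w ≠ y
  wz : w ≠ z
  yz : y ≠ z
  adj_wy : G.Adj w y
  adj_wz : G.Adj w z
  not_adj_yz : ¬ G.Adj y z
  adj_path : ∀ i j : Fin (k + 1), G.Adj (x i) (x j) ↔ (i.1 + 1 = j.1 ∨ j.1 + 1 = i.1)
  adj_y : ∀ i : Fin (k + 1), G.Adj y (x i) ↔ i.1 = k
  adj_z : ∀ i : Fin (k + 1), G.Adj z (x i) ↔ i.1 = k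
  adj_w : ∀ i : Fin (k + 1), G.Adj w (x i) ↔ (t2 = true ∧ i.1 + 1 = k)
  sign_y : ∀ i : Fin (k + 1), i.1 = k → G.sign (x i) y = false
  sign_z : ∀ i : Fin (k + 1), i.1 = k → G.sign (x i) z = false
  sign_w : ∀ i : Fin (k + 1), t2 = true → i.1 + 1 = k → G.sign w (x i) = false

/-- `G` contains a sum of two tadpoles (identified at their ends) as an induced
subgraph. -/
def HasTadpoleSum (G : SignedBigraph V) : Prop :=
  ∃ (k k' : ℕ) (t t' : Bool) (w y z w' y' z' : V)
    (x : Fin (k + 1) → V) (x' : Fin (k' + 1) → V),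
    G.IsInducedTadpole k t w y z x ∧ G.IsInducedTadpole k' t' w' y' z' x' ∧
    x 0 = x' 0 ∧
    tadVerts w y z x ∩ tadVerts w' y' z' x' = {x 0} ∧
    ∀ a ∈ tadVerts w y z x, ∀ b ∈ tadVerts w' y' z' x',
      a ≠ x 0 → b ≠ x' 0 → ¬ G.Adj a b

/-- `G` contains a join of two tadpoles as an induced subgraph: two disjoint induced
tadpoles such that the edges between them are exactly those joining the end of each
tadpole to all vertices of the other tadpole in the opposite partite set; all these
edges are positive, except that the edge from an end to the head `w` of the other
tadpole may be of either sign when that tadpole is a member of `W₁` (i.e. has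
`k = 0` and is of type 1), in which case the ends are required to be adjacent. -/
def HasTadpoleJoin (G : SignedBigraph V) : Prop :=
  ∃ (k k' : ℕ) (t t' : Bool) (w y z w' y' z' : V)
    (x : Fin (k + 1) → V) (x' : Fin (k' + 1) → V),
    G.IsInducedTadpole k t w y z x ∧ G.IsInducedTadpole k' t' w' y' z' x' ∧
    Disjoint (tadVerts w y z x) (tadVerts w' y' z' x') ∧
    (∀ a ∈ tadVerts w y z x, ∀ b ∈ tadVerts w' y' z' x',
      (G.Adj a b ↔ ((a = x 0 ∨ b = x' 0) ∧ G.side a ≠ G.side b))) ∧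
    ((k = 0 ∧ t = false) ∨ (k' = 0 ∧ t' = false) → G.side (x 0) ≠ G.side (x' 0)) ∧
    (∀ a ∈ tadVerts w y z x, ∀ b ∈ tadVerts w' y' z' x', G.Adj a b →
      ¬ (a = x 0 ∧ b = w' ∧ k' = 0 ∧ t' = false) →
      ¬ (a = w ∧ b = x' 0 ∧ k = 0 ∧ t = false) →
      G.sign a b = true)

/-- `G` contains a member of
`ℱ = F₁ ∪ F₂ ∪ F₃ ∪ F₄ ∪ F₅ ∪ F₆ ∪ 𝒞 ∪ D ∪ 𝒮 ∪ 𝒥` as an induced subgraph. -/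
def HasForbidden (G : SignedBigraph V) : Prop :=
  G.HasF1 ∨ G.HasF2 ∨ G.HasF3 ∨ G.HasF4 ∨ G.HasF5 ∨ G.HasF6 ∨
  G.HasLongCycle ∨ G.HasD ∨ G.HasTadpoleSum ∨ G.HasTadpoleJoin

/-- `G` is `ℱ`-free. -/
def FFree (G : SignedBigraph V) : Prop := ¬ G.HasForbidden

end SignedBigraph

/-! ## Concrete complete signed bipartite graphs (for the graphs M₁ – M₅) -/

/-- The complete bipartite graph on `Fin a ⊕ Fin b`. -/
def cbsGraph (a b : ℕ) : SimpleGraph (Fin a ⊕ Fin b) where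
  Adj u v := u.isLeft ≠ v.isLeft
  symm := ⟨fun _ _ h => Ne.symm h⟩
  loopless := ⟨fun _ h => h rfl⟩

def cbsSign {a b : ℕ} (sgn : Fin a → Fin b → Bool) :
    Fin a ⊕ Fin b → Fin a ⊕ Fin b → Bool
  | Sum.inl i, Sum.inr j => sgn i j
  | Sum.inr j, Sum.inl i => sgn i j
  | _, _ => true

/-- The complete signed bipartite graph with parts `Fin a`, `Fin b`, and signs given
by `sgn`. -/
def completeSignedBigraph (a b : ℕ) (sgn : Fin a → Fin b → Bool) :
    SignedBigraph (Fin a ⊕ Fin b) where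
  graph := cbsGraph a b
  sign := cbsSign sgn
  sign_symm := by
    intro u v
    cases u <;> cases v <;> rfl
  side := Sum.isLeft
  bipartite := fun _ _ h => h

/-- `M₁`: the all-negative 4-cycle. -/
def Mgraph1 : SignedBigraph (Fin 2 ⊕ Fin 2) :=
  completeSignedBigraph 2 2 (fun _ _ => false)

/-- `M₂`. -/
def Mgraph2 : SignedBigraph (Fin 2 ⊕ Fin 3) :=
  completeSignedBigraph 2 3
    (fun i j => ! decide ((i = 0 ∧ (j = 0 ∨ j = 1)) ∨ (i = 1 ∧ (j = 1 ∨ j = 2))))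

/-- `M₃`. -/
def Mgraph3 : SignedBigraph (Fin 2 ⊕ Fin 4) :=
  completeSignedBigraph 2 4
    (fun i j => ! decide ((i = 0 ∧ (j = 0 ∨ j = 1)) ∨ (i = 1 ∧ (j = 2 ∨ j = 3))))

/-- `M₄`. -/
def Mgraph4 : SignedBigraph (Fin 3 ⊕ Fin 3) :=
  completeSignedBigraph 3 3 (fun i j => ! decide ((i : ℕ) = (j : ℕ)))

/-- `M₅`. -/
def Mgraph5 : SignedBigraph (Fin 3 ⊕ Fin 3) :=
  completeSignedBigraph 3 3
    (fun i j => ! decide ((i = 0 ∧ (j = 0 ∨ j = 1)) ∨ (i = 1 ∧ j = 1) ∨ (i = 2 ∧ j = 2)))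

/-!
Since `xᵢ, xⱼ ∈ N(y₁)` and `N(y₁)` is the smallest neighbourhood in `Y`, both `xᵢ` and `xⱼ`
are adjacent to all of `Y`. Let `c` be the last neighbour of `y_r` in the ordering, so that
`N(c) ⊆ N(x')` for every `x' ∈ N(y_r)`; then `c` misses `y_l`, as `x_k` does. Because of this
inclusion, the failure of `c y_r` to be signed simplicial is witnessed by a *negative edge*
`x' y'` with `x' ∈ N(y_r)`, `y' ∈ N(c)`. If `x' ∈ {xᵢ, xⱼ}`, the vertices `c, xᵢ, xⱼ, y_r, y', y_l`
induce a member of `F₅`. Otherwise the edge `x' y_r` yields a non-positive pair `x'' y''` with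
`y'' ∈ N(x')`: if `y'' ∉ N(c)` we find `F₅` on `c, xⱼ, x'`; if `y'' ∈ N(c)` the pair is a negative
edge and, unless `x''` is `xᵢ` or `xⱼ` again, we get `F₃` (when `y'' = y'`) or `F₄`.
-/

namespace SignedBigraph

variable {V : Type u} {G : SignedBigraph V}

protected lemma Adj.symm {a b : V} (h : G.Adj a b) : G.Adj b a :=
  SimpleGraph.Adj.symm h

lemma Adj.side_eq_not {a b : V} (h : G.Adj a b) : G.side b = !G.side a :=
  Bool.eq_not_of_ne (G.bipartite h).symm

lemma side_eq_of_adj_of_adj {a b w : V} (ha : G.Adj a w) (hb : G.Adj b w) :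
    G.side a = G.side b :=
  (Bool.eq_not_of_ne (G.bipartite ha)).trans (Bool.eq_not_of_ne (G.bipartite hb)).symm

lemma not_adj_of_side_eq {a b : V} (h : G.side a = G.side b) : ¬ G.Adj a b :=
  fun hab => G.bipartite hab h

lemma not_adj_of_mem {s : Bool} {l : List V} (hl : ∀ v ∈ l, G.side v = s) {a b : V}
    (ha : a ∈ l) (hb : b ∈ l) : ¬ G.Adj a b :=
  not_adj_of_side_eq ((hl a ha).trans (hl b hb).symm)

lemma pairwise_ne_append_of_side {s : Bool} {us vs : List V}
    (hu : ∀ v ∈ us, G.side v = s) (hv : ∀ v ∈ vs, G.side v = !s)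
    (hus : us.Pairwise (· ≠ ·)) (hvs : vs.Pairwise (· ≠ ·)) :
    (us ++ vs).Pairwise (· ≠ ·) :=
  List.pairwise_append.2 ⟨hus, hvs, fun a ha b hb hab =>
    Bool.self_ne_not s ((hu a ha).symm.trans (hab ▸ hv b hb))⟩

lemma hasF3_of_side {s : Bool} {u1 u2 v1 v2 v3 v4 : V}
    (hu : ∀ v ∈ [u1, u2], G.side v = s) (hv : ∀ v ∈ [v1, v2, v3, v4], G.side v = !s)
    (hud : u1 ≠ u2) (hvd : [v1, v2, v3, v4].Pairwise (· ≠ ·))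
    (h11 : G.Adj u1 v1) (h12 : G.Adj u1 v2) (h13 : G.Adj u1 v3) (h14 : G.Adj u1 v4)
    (h21 : G.Adj u2 v1) (h22 : G.Adj u2 v2) (h23 : G.Adj u2 v3) (h24 : G.Adj u2 v4)
    (s11 : G.sign u1 v1 = false) (s12 : G.sign u1 v2 = false)
    (s23 : G.sign u2 v3 = false) (s24 : G.sign u2 v4 = false) : G.HasF3 :=
  ⟨u1, u2, v1, v2, v3, v4,
    pairwise_ne_append_of_side hu hv (by simpa using hud) hvd,
    h11, h12, h13, h14, h21, h22, h23, h24,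
    not_adj_of_mem hu (by simp) (by simp),
    not_adj_of_mem hv (by simp) (by simp), not_adj_of_mem hv (by simp) (by simp),
    not_adj_of_mem hv (by simp) (by simp), not_adj_of_mem hv (by simp) (by simp),
    not_adj_of_mem hv (by simp) (by simp), not_adj_of_mem hv (by simp) (by simp),
    s11, s12, s23, s24⟩

lemma hasF4_of_side {s : Bool} {u1 u2 u3 v1 v2 v3 : V}
    (hu : ∀ v ∈ [u1, u2, u3], G.side v = s) (hv : ∀ v ∈ [v1, v2, v3], G.side v = !s)
    (hud : [u1, u2, u3].Pairwise (· ≠ ·)) (hvd : [v1, v2, v3].Pairwise (· ≠ ·))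
    (h11 : G.Adj u1 v1) (h12 : G.Adj u1 v2) (h13 : G.Adj u1 v3)
    (h21 : G.Adj u2 v1) (h22 : G.Adj u2 v2) (h23 : G.Adj u2 v3)
    (h31 : G.Adj u3 v1) (h32 : G.Adj u3 v2) (h33 : G.Adj u3 v3)
    (s11 : G.sign u1 v1 = false) (s22 : G.sign u2 v2 = false)
    (s33 : G.sign u3 v3 = false) : G.HasF4 :=
  ⟨u1, u2, u3, v1, v2, v3, pairwise_ne_append_of_side hu hv hud hvd,
    h11, h12, h13, h21, h22, h23, h31, h32, h33,
    not_adj_of_mem hu (by simp) (by simp), not_adj_of_mem hu (by simp) (by simp),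
    not_adj_of_mem hu (by simp) (by simp), not_adj_of_mem hv (by simp) (by simp),
    not_adj_of_mem hv (by simp) (by simp), not_adj_of_mem hv (by simp) (by simp),
    s11, s22, s33⟩

lemma hasF5_of_side {s : Bool} {x1 x2 x3 y1 y2 y3 : V}
    (hx : ∀ v ∈ [x1, x2, x3], G.side v = s) (hy : ∀ v ∈ [y1, y2, y3], G.side v = !s)
    (hx23 : x2 ≠ x3) (hy12 : y1 ≠ y2)
    (h11 : G.Adj x1 y1) (h12 : G.Adj x1 y2) (h13 : ¬ G.Adj x1 y3)
    (h21 : G.Adj x2 y1) (h22 : G.Adj x2 y2) (h23 : G.Adj x2 y3)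
    (h31 : G.Adj x3 y1) (h32 : G.Adj x3 y2) (h33 : G.Adj x3 y3)
    (s21 : G.sign x2 y1 = false) (s32 : G.sign x3 y2 = false) : G.HasF5 := by
  have hxd : [x1, x2, x3].Pairwise (· ≠ ·) := by
    have hx12 : x1 ≠ x2 := fun h => h13 (h ▸ h23)
    have hx13 : x1 ≠ x3 := fun h => h13 (h ▸ h33)
    simp [hx12, hx13, hx23]
  have hyd : [y1, y2, y3].Pairwise (· ≠ ·) := by
    have hy13 : y1 ≠ y3 := fun h => h13 (h ▸ h11)
    have hy23 : y2 ≠ y3 := fun h => h13 (h ▸ h12)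
    simp [hy12, hy13, hy23]
  exact ⟨x1, x2, x3, y1, y2, y3, pairwise_ne_append_of_side hx hy hxd hyd,
    h11, h12, h13, h21, h22, h23, h31, h32, h33,
    not_adj_of_mem hx (by simp) (by simp), not_adj_of_mem hx (by simp) (by simp),
    not_adj_of_mem hx (by simp) (by simp), not_adj_of_mem hy (by simp) (by simp),
    not_adj_of_mem hy (by simp) (by simp), not_adj_of_mem hy (by simp) (by simp),
    s21, s32⟩

lemma edgeNbhd_comm (a b : V) : G.edgeNbhd a b = G.edgeNbhd b a := by
  simp only [edgeNbhd, Set.union_comm, Set.pair_comm]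

lemma adj_of_mem_edgeNbhd_of_side_eq {u w e : V} (he : e ∈ G.edgeNbhd u w)
    (hside : G.side e = G.side u) : G.Adj w e ∧ e ≠ u := by
  obtain ⟨hadj | hadj, hne⟩ := he
  · exact absurd hside.symm (G.bipartite hadj)
  · exact ⟨hadj, fun h => hne (Or.inl h)⟩

lemma exists_not_pos_of_not_signedSimplicial {u w : V} (huw : G.Adj u w)
    (h : ¬ G.SignedSimplicial u w) :
    ∃ a b, G.Adj w a ∧ a ≠ u ∧ G.Adj u b ∧ b ≠ w ∧ ¬ (G.Adj a b ∧ G.sign a b = true) := by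
  simp only [SignedSimplicial, huw, true_and, not_forall] at h
  obtain ⟨c, hc, d, hd, hcd, hbad⟩ := h
  have side_eq_of_ne : ∀ e, G.side e ≠ G.side u → G.side e = G.side w := fun e he =>
    (Bool.eq_not_of_ne he).trans (Bool.eq_not_of_ne (G.bipartite huw).symm).symm
  by_cases hcu : G.side c = G.side u
  · obtain ⟨hwc, hcu'⟩ := adj_of_mem_edgeNbhd_of_side_eq hc hcu
    obtain ⟨hud, hdw⟩ := adj_of_mem_edgeNbhd_of_side_eq (edgeNbhd_comm u w ▸ hd)
      (side_eq_of_ne d (hcu ▸ hcd.symm))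
    exact ⟨c, d, hwc, hcu', hud, hdw, hbad⟩
  · obtain ⟨huc, hcw⟩ := adj_of_mem_edgeNbhd_of_side_eq (edgeNbhd_comm u w ▸ hc)
      (side_eq_of_ne c hcu)
    have hdu : G.side d = G.side u := by
      rw [Bool.eq_not_of_ne hcd.symm, Bool.eq_not_of_ne hcu, Bool.not_not]
    obtain ⟨hwd, hdu'⟩ := adj_of_mem_edgeNbhd_of_side_eq hd hdu
    refine ⟨d, c, hwd, hdu', huc, hcw, ?_⟩
    rwa [G.sign_symm, show G.Adj d c ↔ G.Adj c d from ⟨Adj.symm, Adj.symm⟩]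

lemma exists_neg_edge_of_not_signedSimplicial {u w : V} (huw : G.Adj u w)
    (hmin : ∀ a, G.Adj w a → G.graph.neighborSet u ⊆ G.graph.neighborSet a)
    (h : ¬ G.SignedSimplicial u w) :
    ∃ a b, G.Adj w a ∧ a ≠ u ∧ G.Adj u b ∧ b ≠ w ∧ G.Adj a b ∧ G.sign a b = false := by
  obtain ⟨a, b, hwa, hau, hub, hbw, hab_not_pos⟩ := exists_not_pos_of_not_signedSimplicial huw h
  have hab : G.Adj a b := hmin a hwa hub
  exact ⟨a, b, hwa, hau, hub, hbw, hab, by simpa [hab] using hab_not_pos⟩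

def IsUniversal (G : SignedBigraph V) (a : V) : Prop :=
  ∀ w, G.side w = !G.side a → G.Adj a w

lemma IsUniversal.adj {s : Bool} {a w : V} (ha : G.IsUniversal a) (has : G.side a = s)
    (hw : G.side w = !s) : G.Adj a w :=
  ha w (has ▸ hw)

lemma hasF5_of_universal_pair {s : Bool} {a b c p q x y : V}
    (ha : G.IsUniversal a) (hb : G.IsUniversal b) (hs : ∀ v ∈ [c, a, b], G.side v = s)
    (hab : a ≠ b) (hcq : G.Adj c q) (hcy : G.Adj c y) (hcp : ¬ G.Adj c p)
    (hp : G.side p = !s) (hqy : q ≠ y) (haq : G.sign a q = false) (hbq : G.sign b q = false)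
    (hx : x = a ∨ x = b) (hxy : G.sign x y = false) : G.HasF5 := by
  have hc : G.side c = s := hs c (by simp)
  have hsa : G.side a = s := hs a (by simp)
  have hsb : G.side b = s := hs b (by simp)
  have hq : G.side q = !s := hc ▸ hcq.side_eq_not
  have hy : G.side y = !s := hc ▸ hcy.side_eq_not
  have hys : ∀ v ∈ [q, y, p], G.side v = !s := by simp [hq, hy, hp]
  rcases hx with rfl | rfl
  · exact hasF5_of_side (by simp [hc, hsa, hsb]) hys hab.symm hqy
      hcq hcy hcp (hb.adj hsb hq) (hb.adj hsb hy) (hb.adj hsb hp)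
      (ha.adj hsa hq) (ha.adj hsa hy) (ha.adj hsa hp) hbq hxy
  · exact hasF5_of_side hs hys hab hqy
      hcq hcy hcp (ha.adj hsa hq) (ha.adj hsa hy) (ha.adj hsa hp)
      (hb.adj hsb hq) (hb.adj hsb hy) (hb.adj hsb hp) haq hxy

lemma hasF3_or_hasF4_of_two_neg_edges {s : Bool} {a b x1 x2 q y1 y2 : V}
    (ha : G.IsUniversal a) (hb : G.IsUniversal b) (hs : ∀ v ∈ [a, b, x1, x2], G.side v = s)
    (hd : [a, b, x1, x2].Pairwise (· ≠ ·)) (hq : G.side q = !s) (hqy1 : q ≠ y1)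
    (hqy2 : q ≠ y2) (h1q : G.Adj x1 q) (h11 : G.Adj x1 y1) (h12 : G.Adj x1 y2)
    (h2q : G.Adj x2 q) (h21 : G.Adj x2 y1) (h22 : G.Adj x2 y2)
    (haq : G.sign a q = false) (hbq : G.sign b q = false)
    (s11 : G.sign x1 y1 = false) (s22 : G.sign x2 y2 = false) :
    G.HasF3 ∨ G.HasF4 := by
  have hsa : G.side a = s := hs a (by simp)
  have hsb : G.side b = s := hs b (by simp)
  have hx1 : G.side x1 = s := hs x1 (by simp)
  have hx2 : G.side x2 = s := hs x2 (by simp)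
  have hy1 : G.side y1 = !s := hx1 ▸ h11.side_eq_not
  have hy2 : G.side y2 = !s := hx1 ▸ h12.side_eq_not
  by_cases hy : y1 = y2
  · subst hy
    left
    refine hasF3_of_side (s := !s) (by simp [hq, hy1]) (by simpa using hs) hqy1 hd
      (ha.adj hsa hq).symm (hb.adj hsb hq).symm h1q.symm h2q.symm
      (ha.adj hsa hy1).symm (hb.adj hsb hy1).symm h11.symm h21.symm ?_ ?_ ?_ ?_ <;>
      rwa [G.sign_symm]
  · right
    exact hasF4_of_side (s := s) (by simp [hsa, hx1, hx2]) (by simp [hq, hy1, hy2])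
      (hd.sublist (.cons_cons a (.cons b (.refl _)))) (by simp [hqy1, hqy2, hy])
      (ha.adj hsa hq) (ha.adj hsa hy1) (ha.adj hsa hy2)
      h1q h11 h12 h2q h21 h22 haq s11 s22

theorem hasF3_or_hasF4_or_hasF5_of_universal_pair (hss : ∀ u w, ¬ G.SignedSimplicial u w)
    {s : Bool} {a b c p q : V} (ha : G.IsUniversal a) (hb : G.IsUniversal b)
    (hs : ∀ v ∈ [c, a, b], G.side v = s) (hab : a ≠ b)
    (hcq : G.Adj c q) (hcp : ¬ G.Adj c p) (hp : G.side p = !s)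
    (hmin : ∀ w, G.Adj q w → G.graph.neighborSet c ⊆ G.graph.neighborSet w)
    (haq : G.sign a q = false) (hbq : G.sign b q = false) :
    G.HasF3 ∨ G.HasF4 ∨ G.HasF5 := by
  have hc : G.side c = s := hs c (by simp)
  have hq : G.side q = !s := hc ▸ hcq.side_eq_not
  obtain ⟨x1, y1, hqx1, hx1c, hcy1, hy1q, hx1y1, s11⟩ :=
    exists_neg_edge_of_not_signedSimplicial hcq hmin (hss c q)
  by_cases hx1ab : x1 = a ∨ x1 = b
  · exact Or.inr <| Or.inr <|
      hasF5_of_universal_pair ha hb hs hab hcq hcy1 hcp hp hy1q.symm haq hbq hx1ab s11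
  have hx1 : G.side x1 = s := (side_eq_of_adj_of_adj hqx1.symm hcq).trans hc
  obtain ⟨x2, y2, hqx2, hx2x1, hx1y2, hy2q, hx2y2_not_pos⟩ :=
    exists_not_pos_of_not_signedSimplicial hqx1.symm (hss x1 q)
  by_cases hcy2 : G.Adj c y2
  · have hx2y2 : G.Adj x2 y2 := hmin x2 hqx2 hcy2
    have s22 : G.sign x2 y2 = false := by simpa [hx2y2] using hx2y2_not_pos
    by_cases hx2ab : x2 = a ∨ x2 = b
    · exact Or.inr <| Or.inr <|
        hasF5_of_universal_pair ha hb hs hab hcq hcy2 hcp hp hy2q.symm haq hbq hx2ab s22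
    have hx2 : G.side x2 = s := (side_eq_of_adj_of_adj hqx2.symm hcq).trans hc
    have hd : [a, b, x1, x2].Pairwise (· ≠ ·) := by
      simp only [List.pairwise_cons, List.mem_cons]
      grind
    refine (hasF3_or_hasF4_of_two_neg_edges ha hb ?_ hd hq hy1q.symm hy2q.symm
      hqx1.symm hx1y1 hx1y2 hqx2.symm (hmin x2 hqx2 hcy1) hx2y2 haq hbq s11 s22).imp_right
      Or.inl
    simp [hs a (by simp), hs b (by simp), hx1, hx2]
  · have hsb : G.side b = s := hs b (by simp)
    have hy1 : G.side y1 = !s := hc ▸ hcy1.side_eq_not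
    have hy2 : G.side y2 = !s := hx1 ▸ hx1y2.side_eq_not
    exact Or.inr <| Or.inr <|
      hasF5_of_side (s := s) (by simp [hc, hsb, hx1]) (by simp [hq, hy1, hy2])
        (fun h => hx1ab (Or.inr h.symm)) hy1q.symm hcq hcy1 hcy2
        (hb.adj hsb hq) (hb.adj hsb hy1) (hb.adj hsb hy2) hqx1.symm hx1y1 hx1y2 hbq s11

end SignedBigraph

namespace IsCanonicalOrdering

variable {V : Type u} {G : SimpleGraph V} {side : V → Bool} {α β : ℕ}
  {x : Fin α → V} {y : Fin β → V}

lemma side_x (h : IsCanonicalOrdering G side x y) (m : Fin α) : side (x m) = true :=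
  (h.2.2.1 _).2 ⟨m, rfl⟩

lemma side_y (h : IsCanonicalOrdering G side x y) (m : Fin β) : side (y m) = false :=
  (h.2.2.2.1 _).2 ⟨m, rfl⟩

lemma exists_eq_x (h : IsCanonicalOrdering G side x y) {w : V} (hw : side w = true) :
    ∃ m, x m = w :=
  (h.2.2.1 w).1 hw

lemma adj_of_adj_y_zero (h : IsCanonicalOrdering G side x y) (hβ : 0 < β) {u w : V}
    (hu : G.Adj u (y ⟨0, hβ⟩)) (hw : side w = false) : G.Adj u w := by
  obtain ⟨m, rfl⟩ := (h.2.2.2.1 w).1 hw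
  exact (h.2.2.2.2.2 _ m (Nat.zero_le m) hu.symm).symm

lemma exists_adj_forall_neighborSet_subset (h : IsCanonicalOrdering G side x y) {w : V}
    {k : Fin α} (hk : G.Adj (x k) w) :
    ∃ m, G.Adj (x m) w ∧ ∀ n, G.Adj (x n) w → G.neighborSet (x m) ⊆ G.neighborSet (x n) := by
  classical
  obtain ⟨m, hm, hmax⟩ :=
    (Finset.univ.filter fun n => G.Adj (x n) w).exists_max_image id ⟨k, by simpa using hk⟩
  exact ⟨m, by simpa using hm, fun n hn => h.2.2.2.2.1 n m (hmax n (by simpa using hn))⟩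

end IsCanonicalOrdering

open SignedBigraph in
theorem hasF_of_Z1_general
    {V : Type u} (G : SignedBigraph V)
    {α β : ℕ} (x : Fin α → V) (y : Fin β → V)
    (hcan : IsCanonicalOrdering G.graph G.side x y)
    (hβ : 0 < β)
    (i j k : Fin α) (l r : Fin β)
    -- xᵢ, xⱼ ∈ N(y₁)
    (hi1 : G.Adj (x i) (y ⟨0, hβ⟩)) (hj1 : G.Adj (x j) (y ⟨0, hβ⟩))
    -- the Z₁ pattern on xᵢ, xⱼ, xₖ, yₗ, y_r
    (hij : i ≠ j)
    (e5 : G.Adj (x k) (y r))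
    (ne1 : ¬ G.Adj (x k) (y l))
    (s1 : G.sign (x i) (y r) = false) (s2 : G.sign (x j) (y r) = false)
    -- no edge of G is signed simplicial
    (hss : ∀ a b : V, ¬ G.SignedSimplicial a b) :
    G.HasF2 ∨ G.HasF3 ∨ G.HasF4 ∨ G.HasF5 := by
  have universal : ∀ {n}, G.Adj (x n) (y ⟨0, hβ⟩) → G.IsUniversal (x n) := fun hn w hw =>
    hcan.adj_of_adj_y_zero hβ hn (by simpa [hcan.side_x] using hw)
  obtain ⟨m, hmr, hmin⟩ := hcan.exists_adj_forall_neighborSet_subset e5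
  have hmin' : ∀ w, G.Adj (y r) w → G.graph.neighborSet (x m) ⊆ G.graph.neighborSet w := by
    intro w hw
    obtain ⟨n, rfl⟩ := hcan.exists_eq_x (by simpa [hcan.side_y] using (G.bipartite hw).symm)
    exact hmin n hw.symm
  exact Or.inr <| hasF3_or_hasF4_or_hasF5_of_universal_pair (s := true) hss
    (universal hi1) (universal hj1) (by simp [hcan.side_x]) (hcan.1.ne hij) hmr
    (fun h => ne1 (hmin k e5 h)) (hcan.side_y l) hmin' s1 s2

open SignedBigraph in
/-- Lemma 3.3: if a signed non-separable bigraph without isolated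
vertices and without signed simplicial edges contains a member of `Z₁` induced by
`xᵢ, xⱼ, xₖ, yₗ, y_r` with `xᵢ, xⱼ ∈ N(y₁)`, then it contains a member of
`F₂ ∪ F₃ ∪ F₄ ∪ F₅` as an induced subgraph. -/
theorem hasF_of_Z1
    {V : Type u} (G : SignedBigraph V)
    (hns : ¬ IsSeparableGraph G.graph)
    (hiso : ∀ v : V, ∃ w : V, G.Adj v w)
    {α β : ℕ} (x : Fin α → V) (y : Fin β → V)
    (hcan : IsCanonicalOrdering G.graph G.side x y)
    (hβ : 0 < β)
    (i j k : Fin α) (l r : Fin β)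
    -- xᵢ, xⱼ ∈ N(y₁)
    (hi1 : G.Adj (x i) (y ⟨0, hβ⟩)) (hj1 : G.Adj (x j) (y ⟨0, hβ⟩))
    -- the Z₁ pattern on xᵢ, xⱼ, xₖ, yₗ, y_r
    (hij : i ≠ j) (hik : i ≠ k) (hjk : j ≠ k) (hlr : l ≠ r)
    (e1 : G.Adj (x i) (y l)) (e2 : G.Adj (x j) (y l))
    (e3 : G.Adj (x i) (y r)) (e4 : G.Adj (x j) (y r)) (e5 : G.Adj (x k) (y r))
    (ne1 : ¬ G.Adj (x k) (y l))
    (s1 : G.sign (x i) (y r) = false) (s2 : G.sign (x j) (y r) = false)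
    -- no edge of G is signed simplicial
    (hss : ∀ a b : V, ¬ G.SignedSimplicial a b) :
    G.HasF2 ∨ G.HasF3 ∨ G.HasF4 ∨ G.HasF5 :=
  hasF_of_Z1_general G x y hcan hβ i j k l r hi1 hj1 hij e5 ne1 s1 s2 hss
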